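/- With g = min(m,n), the sum of p(w) over all legitimate extended states w equals B · ∑_{b=0}^{g} ∑_{x=0}^{m−b} (ρ^x/x!) · (∏_{r=0}^{x+b−1} θ(r)) · c_b, where ρ = ∑_{i=1}^k ρ_i and c_b = ∑_{a ∈ {I,W,T}^n : #{j : a_j=T} = b} ∏_{j=1}^n (α_j/β_j)^{[a_j=W]} (α_j u_j/(β_j v_j))^{[a_j=T]}. -/

import Mathlib

/-!
For a fixed total `xt = ∑ xᵢ` of free users the factor `∏ θ` depends only on `xt` and the number `b`
of transmitting persistent users, and the multinomial theorem collapses `∑ ∏ ρᵢ^xᵢ/xᵢ!` over the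
tuples of total `xt` to `ρ^xt/xt!`. Grouping the persistent configurations by `b` then produces
`c b`. Finally `θ m = 0` makes every term with `b > m` vanish, so the range of `b` can be cut
from `n` down to `min m n`.
-/

/-- Activity state of a persistent user: Idle, Waiting, or Transmitting. -/
inductive Act : Type
  | I : Act
  | W : Act
  | T : Act
deriving DecidableEq

instance instFintypeAct : Fintype Act :=
  ⟨{Act.I, Act.W, Act.T}, fun x => by cases x <;> simp⟩

/-- Number of persistent users that are transmitting. -/
def busyP {n : ℕ} (a : Fin n → Act) : ℕ :=
  (Finset.univ.filter (fun j => a j = Act.T)).card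

/-- The factor `(α/β)^{[a=W]} (αu/(βv))^{[a=T]}` contributed by one persistent user. -/
noncomputable def fac (α β u v : ℝ) : Act → ℝ
  | Act.I => 1
  | Act.W => α / β
  | Act.T => α * u / (β * v)

open Finset

section
variable {K : Type*} [Field K]

theorem sum_antidiagonalTuple_prod_pow_div_factorial [CharZero K] (k N : ℕ) (ρ : Fin k → K) :
    ∑ x ∈ Nat.antidiagonalTuple k N, ∏ i, ρ i ^ x i / (x i).factorial =
      (∑ i, ρ i) ^ N / N.factorial := by
  classical
  rw [← piAntidiag_univ_fin_eq_antidiagonalTuple,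
    eq_div_iff (Nat.cast_ne_zero.2 N.factorial_ne_zero), sum_pow_eq_sum_piAntidiag, sum_mul]
  refine sum_congr rfl fun x hx => ?_
  have hspec : ((∏ i, (x i).factorial : ℕ) : K) * Nat.multinomial univ x = N.factorial := by
    rw [← (mem_piAntidiag.1 hx).1]
    exact_mod_cast Nat.multinomial_spec univ x
  have hne : ∏ i, ((x i).factorial : K) ≠ 0 :=
    prod_ne_zero_iff.2 fun i _ => Nat.cast_ne_zero.2 (x i).factorial_ne_zero
  rw [← hspec, prod_div_distrib, Nat.cast_prod]
  field_simp

def busyWeight (θ : ℕ → K) (ρ : K) (m b : ℕ) : K :=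
  ∑ xt ∈ range (m - b + 1), ρ ^ xt / xt.factorial * ∏ r ∈ range (xt + b), θ r

theorem busyWeight_eq_zero_of_lt {θ : ℕ → K} {m b : ℕ} (hθ : θ m = 0) (hb : m < b) (ρ : K) :
    busyWeight θ ρ m b = 0 := by
  have hθb : ∏ r ∈ range b, θ r = 0 := prod_eq_zero (mem_range.2 hb) hθ
  simp [busyWeight, Nat.sub_eq_zero_of_le hb.le, hθb]

theorem sum_range_sum_antidiagonalTuple_eq_busyWeight [CharZero K] {θ : ℕ → K} {m : ℕ}
    (hθ : θ m = 0) (k b : ℕ) (ρ : Fin k → K) :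
    ∑ xt ∈ range (m + 1 - b), ∑ x ∈ Nat.antidiagonalTuple k xt,
        (∏ r ∈ range (∑ i, x i + b), θ r) * ∏ i, ρ i ^ x i / (x i).factorial =
      busyWeight θ (∑ i, ρ i) m b := by
  have hfiber : ∀ xt, ∑ x ∈ Nat.antidiagonalTuple k xt,
      (∏ r ∈ range (∑ i, x i + b), θ r) * ∏ i, ρ i ^ x i / (x i).factorial =
        (∑ i, ρ i) ^ xt / xt.factorial * ∏ r ∈ range (xt + b), θ r := by
    intro xt
    rw [sum_congr rfl fun x hx => by rw [Nat.mem_antidiagonalTuple.1 hx], ← mul_sum,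
      sum_antidiagonalTuple_prod_pow_div_factorial, mul_comm]
  simp only [hfiber]
  -- `m + 1 - b` and `m - b + 1` differ only for `b > m`, where `θ m = 0` kills the extra term.
  rcases le_or_gt b m with hb | hb
  · rw [busyWeight, Nat.sub_add_comm hb]
  · rw [busyWeight_eq_zero_of_lt hθ hb, Nat.sub_eq_zero_of_le hb, range_zero, sum_empty]

end

theorem busyP_le {n : ℕ} (a : Fin n → Act) : busyP a ≤ n :=
  (card_filter_le _ _).trans_eq (card_fin n)

theorem total_mass_grouped_by_busy_persistent_general
    (m k n : ℕ)
    (θ : ℕ → ℝ)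
    (hθ3 : θ m = 0)
    (α β u v : Fin n → ℝ)
    (ρ : Fin k → ℝ)
    (B : ℝ)
    (p : (Fin k → ℕ) → (Fin n → Act) → ℝ)
    (hp : ∀ (x : Fin k → ℕ) (a : Fin n → Act),
      p x a = B * (∏ r ∈ Finset.range (∑ i, x i + busyP a), θ r) *
        (∏ i, ρ i ^ (x i) / (x i).factorial) *
        ∏ j, fac (α j) (β j) (u j) (v j) (a j))
    (c : ℕ → ℝ)
    (hc : ∀ b, c b = ∑ a ∈ Finset.univ.filter (fun a : Fin n → Act => busyP a = b),
      ∏ j, fac (α j) (β j) (u j) (v j) (a j)) :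
    ∑ a : Fin n → Act, ∑ xt ∈ Finset.range (m + 1 - busyP a),
        ∑ x ∈ Finset.Nat.antidiagonalTuple k xt, p x a =
      B * ∑ b ∈ Finset.range (min m n + 1), ∑ xt ∈ Finset.range (m - b + 1),
        (∑ i, ρ i) ^ xt / xt.factorial * (∏ r ∈ Finset.range (xt + b), θ r) * c b := by
  set F : (Fin n → Act) → ℝ := fun a => ∏ j, fac (α j) (β j) (u j) (v j) (a j)
  have hstate : ∀ a, ∑ xt ∈ range (m + 1 - busyP a), ∑ x ∈ Nat.antidiagonalTuple k xt, p x a =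
      B * (busyWeight θ (∑ i, ρ i) m (busyP a) * F a) := by
    intro a
    rw [← sum_range_sum_antidiagonalTuple_eq_busyWeight hθ3, sum_mul, mul_sum]
    refine sum_congr rfl fun xt _ => ?_
    rw [sum_mul, mul_sum]
    exact sum_congr rfl fun x _ => by rw [hp]; ring
  have hmaps : ∀ a ∈ (univ : Finset (Fin n → Act)), busyP a ∈ range (n + 1) :=
    fun a _ => mem_range.2 (Nat.lt_succ_of_le (busyP_le a))
  calc _ = B * ∑ a, busyWeight θ (∑ i, ρ i) m (busyP a) * F a := by
        simp only [hstate, ← mul_sum]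
    _ = B * ∑ b ∈ range (n + 1), busyWeight θ (∑ i, ρ i) m b * c b := by
        rw [← sum_fiberwise_of_maps_to hmaps]
        refine congrArg _ (sum_congr rfl fun b _ => ?_)
        rw [hc, mul_sum]
        exact sum_congr rfl fun a ha => by rw [(mem_filter.1 ha).2]
    _ = B * ∑ b ∈ range (min m n + 1), busyWeight θ (∑ i, ρ i) m b * c b := by
        refine congrArg _ (sum_subset (range_subset_range.2 (by omega)) fun b hb hb' => ?_).symm
        rw [busyWeight_eq_zero_of_lt hθ3 (by simp at hb hb'; omega), zero_mul]
    _ = _ := by simp only [busyWeight, sum_mul]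

/-- the total probability mass over all legitimate extended states equals
`B ∑_{b=0}^{g} ∑_{x=0}^{m-b} (ρ^x/x!) (∏_{r=0}^{x+b-1} θ(r)) c_b` with `g = min m n`. -/
theorem total_mass_grouped_by_busy_persistent
    (m k n : ℕ) (hm : 0 < m) (hk : 0 < k) (hn : 0 < n)
    (θ : ℕ → ℝ)
    (hθ1 : ∀ b ≤ m, 0 ≤ θ b ∧ θ b ≤ 1)
    (hθ2 : ∀ b < m, 0 < θ b)
    (hθ3 : θ m = 0)
    (lam μ : Fin k → ℝ) (hlam : ∀ i, 0 < lam i) (hμ : ∀ i, 0 < μ i)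
    (α β u v : Fin n → ℝ)
    (hα : ∀ j, 0 < α j) (hβ : ∀ j, 0 < β j) (hu : ∀ j, 0 < u j) (hv : ∀ j, 0 < v j)
    (ρ : Fin k → ℝ) (hρ : ∀ i, ρ i = lam i / μ i)
    (B : ℝ) (hB : 0 < B)
    (p : (Fin k → ℕ) → (Fin n → Act) → ℝ)
    (hp : ∀ (x : Fin k → ℕ) (a : Fin n → Act),
      p x a = B * (∏ r ∈ Finset.range (∑ i, x i + busyP a), θ r) *
        (∏ i, ρ i ^ (x i) / (x i).factorial) *
        ∏ j, fac (α j) (β j) (u j) (v j) (a j))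
    (c : ℕ → ℝ)
    (hc : ∀ b, c b = ∑ a ∈ Finset.univ.filter (fun a : Fin n → Act => busyP a = b),
      ∏ j, fac (α j) (β j) (u j) (v j) (a j)) :
    ∑ a : Fin n → Act, ∑ xt ∈ Finset.range (m + 1 - busyP a),
        ∑ x ∈ Finset.Nat.antidiagonalTuple k xt, p x a =
      B * ∑ b ∈ Finset.range (min m n + 1), ∑ xt ∈ Finset.range (m - b + 1),
        (∑ i, ρ i) ^ xt / xt.factorial * (∏ r ∈ Finset.range (xt + b), θ r) * c b :=
  total_mass_grouped_by_busy_persistent_general m k n θ hθ3 α β u v ρ B p hp c hc
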